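/- arXiv:2207.12257 — 2 statements merged into one kernel-verified Lean document; each statement's English description precedes it below -/
import Mathlib

section
/- The linear endomorphism σ of Â_S determined by σ(c) = c and σ(A_{α,m}) = χ(α)·A_{α,m} is a Lie algebra automorphism of Â_S; it satisfies σ ∘ τ_C = τ_B ∘ σ; and consequently σ restricts to a Lie algebra isomorphism from the fixed-point subalgebra Ĉ_S = {u ∈ Â_S : τ_C(u) = u} onto the fixed-point subalgebra B̂_S = {u ∈ Â_S : τ_B(u) = u}. -/
open scoped Classical

/-- The underlying vector space `ℂ ⊕ ((S × ℤ) →₀ ℂ)` of the trigonometric Lie algebra `Â_S`. -/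
abbrev TrigA (S : Type*) := ℂ × ((S × ℤ) →₀ ℂ)

/-- The central basis element `c`. -/
noncomputable def Acen (S : Type*) : TrigA S := (1, 0)

/-- The basis element `A_{α,m}`. -/
noncomputable def Agen {S : Type*} (α : S) (m : ℤ) : TrigA S := (0, Finsupp.single (α, m) 1)

/-- The value of the bracket on basis elements. -/
noncomputable def AbrkBasis {S : Type*} [AddCommGroup S] (χ : S → ℂˣ) (p q : S × ℤ) :
    TrigA S :=
  ((if p.1 + q.1 = 0 ∧ p.2 + q.2 = 0 then (p.2 : ℂ) else 0),
    Finsupp.single (p.1 + q.1, p.2 + q.2)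
      (((χ (p.2 • q.1 - q.2 • p.1) : ℂˣ) : ℂ) - ((χ (q.2 • p.1 - p.2 • q.1) : ℂˣ) : ℂ)))

/-- The Lie bracket of `Â_S`. -/
noncomputable def Abrk {S : Type*} [AddCommGroup S] (χ : S → ℂˣ) (x y : TrigA S) : TrigA S :=
  x.2.sum fun p a => y.2.sum fun q b => (a * b) • AbrkBasis χ p q

/-- The linear endomorphism of `Â_S` fixing `c` and sending `A_{α,m} ↦ cf(α,m) • A_{σ(α,m)}`. -/
noncomputable def twistA {S : Type*} (cf : S × ℤ → ℂ) (σ : S × ℤ → S × ℤ) :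
    TrigA S →ₗ[ℂ] TrigA S :=
  LinearMap.prodMap LinearMap.id
    (Finsupp.lsum ℂ fun p => cf p • Finsupp.lsingle (σ p))

/-- `τ_B(c) = c`, `τ_B(A_{α,m}) = −(−1)^m A_{−α,m}`. -/
noncomputable def tauB (S : Type*) [AddCommGroup S] : TrigA S →ₗ[ℂ] TrigA S :=
  twistA (fun p => -(-1 : ℂ) ^ p.2) (fun p => (-p.1, p.2))

/-- `τ_C(c) = c`, `τ_C(A_{α,m}) = −(−1)^m χ(2α) A_{−α,m}`. -/
noncomputable def tauC {S : Type*} [AddCommGroup S] (χ : S → ℂˣ) : TrigA S →ₗ[ℂ] TrigA S :=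
  twistA (fun p => -(-1 : ℂ) ^ p.2 * ((χ (p.1 + p.1) : ℂˣ) : ℂ)) (fun p => (-p.1, p.2))

/-- `τ_D(c) = c`, `τ_D(A_{α,m}) = −χ(2α) A_{−α,m}`. -/
noncomputable def tauD {S : Type*} [AddCommGroup S] (χ : S → ℂˣ) : TrigA S →ₗ[ℂ] TrigA S :=
  twistA (fun p => -((χ (p.1 + p.1) : ℂˣ) : ℂ)) (fun p => (-p.1, p.2))

/-- `σ(c) = c`, `σ(A_{α,m}) = χ(α)·A_{α,m}`. -/
noncomputable def sigmaA {S : Type*} [AddCommGroup S] (χ : S → ℂˣ) : TrigA S →ₗ[ℂ] TrigA S :=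
  twistA (fun p => ((χ p.1 : ℂˣ) : ℂ)) (fun p => p)

/-! σ is diagonal in the basis, scaling `A_{α,m}` by `χ(α)`. The bracket of `A_{α,m}` and
`A_{β,n}` is homogeneous of `S`-degree `α + β`, and its central part only occurs when
`α + β = 0`, where `χ(α)χ(β) = χ(0) = 1`; so multiplicativity of `χ` makes σ a homomorphism.
The intertwining `σ ∘ τ_C = τ_B ∘ σ` is the identity `χ(α)χ(-2α) = χ(-α)`, and a bijection
intertwining two maps restricts to a bijection between their fixed points. -/

namespace Function

theorem Semiconj.bijOn_fixedPoints {α β : Type*} {e : α → β} {fa : α → α} {fb : β → β}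
    (he : Bijective e) (h : Semiconj e fa fb) :
    Set.BijOn e (fixedPoints fa) (fixedPoints fb) := by
  refine ⟨h.mapsTo_fixedPoints, he.injective.injOn, fun y hy => ?_⟩
  obtain ⟨x, rfl⟩ := he.surjective y
  exact ⟨x, he.injective (by rw [h.eq, hy.eq]), rfl⟩

end Function

section Twist

variable {S : Type*}

theorem twistA_fst (cf : S × ℤ → ℂ) (σ : S × ℤ → S × ℤ) (x : TrigA S) :
    (twistA cf σ x).1 = x.1 := rfl

theorem twistA_snd_apply_of_injective (cf : S × ℤ → ℂ) {σ : S × ℤ → S × ℤ}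
    (hσ : Function.Injective σ) (x : TrigA S) (q : S × ℤ) :
    (twistA cf σ x).2 (σ q) = cf q * x.2 q := by
  simp only [twistA, LinearMap.prodMap_apply, Finsupp.lsum_apply, Finsupp.sum_apply,
    LinearMap.smul_apply, Finsupp.lsingle_apply, Finsupp.smul_apply, Finsupp.single_apply,
    hσ.eq_iff, smul_eq_mul, mul_ite, mul_zero]
  rw [Finsupp.sum_ite_eq' x.2 q (fun p a => cf p * a)]
  split_ifs with h
  · rfl
  · rw [Finsupp.notMem_support_iff.1 h, mul_zero]

theorem twistA_Acen (cf : S × ℤ → ℂ) (σ : S × ℤ → S × ℤ) : twistA cf σ (Acen S) = Acen S := by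
  simp [twistA, Acen]

theorem twistA_Agen (cf : S × ℤ → ℂ) (σ : S × ℤ → S × ℤ) (α : S) (m : ℤ) :
    twistA cf σ (Agen α m) = cf (α, m) • Agen (σ (α, m)).1 (σ (α, m)).2 := by
  simp [twistA, Agen]

end Twist

theorem map_zero_of_map_add {S G : Type*} [AddZeroClass S] [Group G] {χ : S → G}
    (hχ : ∀ a b : S, χ (a + b) = χ a * χ b) : χ 0 = 1 := by
  simpa using hχ 0 0

section Sigma

variable {S : Type*} [AddCommGroup S]

theorem sigmaA_fst (χ : S → ℂˣ) (x : TrigA S) : (sigmaA χ x).1 = x.1 := rfl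

theorem sigmaA_snd_apply (χ : S → ℂˣ) (x : TrigA S) (q : S × ℤ) :
    (sigmaA χ x).2 q = χ q.1 * x.2 q :=
  twistA_snd_apply_of_injective _ Function.injective_id x q

theorem twistA_neg_snd_apply (cf : S × ℤ → ℂ) (x : TrigA S) (q : S × ℤ) :
    (twistA cf (fun p => (-p.1, p.2)) x).2 q = cf (-q.1, q.2) * x.2 (-q.1, q.2) := by
  simpa using twistA_snd_apply_of_injective cf (σ := fun p : S × ℤ => (-p.1, p.2))
    (fun p q h => by simpa [Prod.ext_iff] using h) x (-q.1, q.2)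

theorem sigmaA_sigmaA (χ ψ : S → ℂˣ) (x : TrigA S) :
    sigmaA χ (sigmaA ψ x) = sigmaA (χ * ψ) x :=
  Prod.ext rfl <| Finsupp.ext fun q => by simp only [sigmaA_snd_apply, Pi.mul_apply,
    Units.val_mul, mul_assoc]

theorem sigmaA_one (x : TrigA S) : sigmaA 1 x = x :=
  Prod.ext rfl <| Finsupp.ext fun q => by simp [sigmaA_snd_apply]

theorem sigmaA_bijective (χ : S → ℂˣ) : Function.Bijective (sigmaA χ) :=
  Function.bijective_iff_has_inverse.2 ⟨sigmaA χ⁻¹,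
    fun x => by rw [sigmaA_sigmaA, inv_mul_cancel, sigmaA_one],
    fun x => by rw [sigmaA_sigmaA, mul_inv_cancel, sigmaA_one]⟩

theorem sigmaA_support (χ : S → ℂˣ) (x : TrigA S) : (sigmaA χ x).2.support = x.2.support := by
  ext q
  simp [sigmaA_snd_apply]

variable {χ : S → ℂˣ} (hχ : ∀ a b : S, χ (a + b) = χ a * χ b)
include hχ

theorem sigmaA_AbrkBasis (p q : S × ℤ) :
    sigmaA χ (AbrkBasis χ p q) = ((χ p.1 : ℂ) * χ q.1) • AbrkBasis χ p q := by
  rw [← Units.val_mul, ← hχ]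
  refine Prod.ext ?_ (Finsupp.ext fun r => ?_)
  · simp only [sigmaA_fst, AbrkBasis, Prod.smul_fst, smul_eq_mul]
    split_ifs with h
    · rw [h.1, map_zero_of_map_add hχ, Units.val_one, one_mul]
    · rw [mul_zero]
  · simp only [sigmaA_snd_apply, AbrkBasis, Prod.smul_snd, Finsupp.smul_apply,
      Finsupp.single_apply, smul_eq_mul]
    split_ifs with h
    · rw [← h]
    · rw [mul_zero, mul_zero]

theorem sigmaA_Abrk (x y : TrigA S) :
    sigmaA χ (Abrk χ x y) = Abrk χ (sigmaA χ x) (sigmaA χ y) := by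
  simp only [Abrk, Finsupp.sum, sigmaA_support, map_sum, map_smul, sigmaA_AbrkBasis hχ,
    sigmaA_snd_apply, smul_smul]
  refine Finset.sum_congr rfl fun p _ => Finset.sum_congr rfl fun q _ => ?_
  ring_nf

theorem sigmaA_comp_tauC : (sigmaA χ).comp (tauC χ) = (tauB S).comp (sigmaA χ) := by
  refine LinearMap.ext fun x => Prod.ext ?_ (Finsupp.ext fun q => ?_)
  · simp only [LinearMap.comp_apply, tauB, tauC, sigmaA_fst, twistA_fst]
  have key : (χ q.1 : ℂ) * χ (-q.1 + -q.1) = χ (-q.1) := by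
    rw [← Units.val_mul, ← hχ, add_neg_cancel_left]
  simp only [LinearMap.comp_apply, tauB, tauC, sigmaA_snd_apply, twistA_neg_snd_apply]
  linear_combination (-(-1 : ℂ) ^ q.2 * x.2 (-q.1, q.2)) * key

end Sigma

theorem stmt2 {S : Type*} [AddCommGroup S] (χ : S → ℂˣ)
    (hχ : ∀ a b : S, χ (a + b) = χ a * χ b) :
    -- σ takes the prescribed values on `c` and on the basis elements
    (sigmaA χ (Acen S) = Acen S) ∧
    (∀ (α : S) (m : ℤ), sigmaA χ (Agen α m) = ((χ α : ℂˣ) : ℂ) • Agen α m) ∧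
    -- σ is a Lie algebra automorphism of `Â_S`
    Function.Bijective (sigmaA χ) ∧
    (∀ x y : TrigA S, sigmaA χ (Abrk χ x y) = Abrk χ (sigmaA χ x) (sigmaA χ y)) ∧
    -- σ ∘ τ_C = τ_B ∘ σ
    (sigmaA χ).comp (tauC χ) = (tauB S).comp (sigmaA χ) ∧
    -- hence σ restricts to a bijection from `Ĉ_S = {u : τ_C u = u}` onto
    -- `B̂_S = {u : τ_B u = u}` (a Lie algebra isomorphism, by the above)
    Set.BijOn (sigmaA χ) {u : TrigA S | tauC χ u = u} {u : TrigA S | tauB S u = u} :=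
  ⟨twistA_Acen _ _, twistA_Agen _ _, sigmaA_bijective χ, sigmaA_Abrk hχ, sigmaA_comp_tauC hχ,
    Function.Semiconj.bijOn_fixedPoints (sigmaA_bijective χ)
      (LinearMap.congr_fun (sigmaA_comp_tauC hχ))⟩
end

section
/- Let S be an additive abelian group and χ : S → ℂˣ a group homomorphism. Consider the affine Lie algebra L̂_S = (L_S ⊗ ℂ[t,t⁻¹]) ⊕ ℂ·k, with k central and [a⊗t^m, b⊗t^n] = (a·b − b·a)⊗t^{m+n} + m·⟨a,b⟩·δ_{m+n,0}·k, the covariant operation [x,y]_S defined by [k, x]_S = [x, k]_S = 0 and [a⊗t^m, b⊗t^n]_S = ∑_{γ∈S} χ(γ)^m·( [σ_γ(a), b]⊗t^{m+n} + m·⟨σ_γ(a), b⟩·δ_{m+n,0}·k ) (a finite sum), and the subspace I_S = span_ℂ{ χ(γ)^m·(σ_γ(a)⊗t^m) − a⊗t^m : γ ∈ S, a ∈ L_S, m ∈ ℤ }. Then [x,y]_S maps I_S × L̂_S and L̂_S × I_S into I_S, the induced operation on the quotient L̂_S/I_S is a Lie bracket, and the linear map ψ_A : Â_S → L̂_S/I_S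 determined by ψ_A(c) = k + I_S and ψ_A(A_{α,m}) = (L_{α,0}⊗t^m) + I_S is an isomorphism of complex Lie algebras. -/
open scoped Classical

/-! The associative algebra `L_S`, viewed as a Lie algebra. -/

/-- The underlying vector space of `L_S`, with standard basis `{L_{α,β}}`. -/
abbrev LSpace (S : Type*) := (S × S) →₀ ℂ

/-- The basis element `L_{α,β}`. -/
noncomputable def Lgen {S : Type*} (α β : S) : LSpace S := Finsupp.single (α, β) 1

/-- `L_{α,β} · L_{μ,ν} = δ_{α+μ, β−ν} · L_{α+μ, α+ν}`. -/
noncomputable def LmulBasis {S : Type*} [AddCommGroup S] (p q : S × S) : LSpace S :=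
  if p.1 + q.1 = p.2 - q.2 then Finsupp.single (p.1 + q.1, p.1 + q.2) 1 else 0

/-- `⟨L_{α,β}, L_{μ,ν}⟩ = δ_{α+μ,0} · δ_{β,ν}`. -/
noncomputable def LformBasis {S : Type*} [AddCommGroup S] (p q : S × S) : ℂ :=
  if p.1 + q.1 = 0 ∧ p.2 = q.2 then 1 else 0

/-- The translation automorphism `σ_γ` of `L_S`: `σ_γ(L_{α,β}) = L_{α,β+γ}`. -/
noncomputable def sigmaL {S : Type*} [AddCommGroup S] (γ : S) (a : LSpace S) : LSpace S :=
  a.sum fun p x => Finsupp.single (p.1, p.2 + γ) x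

/-! The affine Lie algebra `L̂_S = (L_S ⊗ ℂ[t,t⁻¹]) ⊕ ℂ·k`, realized on the basis
`{L_{α,β} ⊗ t^m} ∪ {k}`. -/

/-- The underlying vector space of `L̂_S`. -/
abbrev HatL (S : Type*) := ℂ × (((S × S) × ℤ) →₀ ℂ)

/-- The central element `k` of `L̂_S`. -/
noncomputable def Hatk (S : Type*) : HatL S := (1, 0)

/-- `a ⊗ t^m` for `a ∈ L_S`. -/
noncomputable def embedHat {S : Type*} (a : LSpace S) (m : ℤ) : HatL S :=
  (0, a.sum fun r x => Finsupp.single (r, m) x)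

/-- The affine bracket on basis elements:
`[L_p ⊗ t^m, L_q ⊗ t^n] = (L_p·L_q − L_q·L_p) ⊗ t^{m+n} + m·⟨L_p,L_q⟩·δ_{m+n,0}·k`. -/
noncomputable def hatBrkBasis {S : Type*} [AddCommGroup S] (P Q : (S × S) × ℤ) : HatL S :=
  ((if P.2 + Q.2 = 0 then (P.2 : ℂ) * LformBasis P.1 Q.1 else 0),
    (LmulBasis P.1 Q.1 - LmulBasis Q.1 P.1).sum fun r x => Finsupp.single (r, P.2 + Q.2) x)

/-- The bracket of the affine Lie algebra `L̂_S` (with `k` central). -/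
noncomputable def hatBrk {S : Type*} [AddCommGroup S] (x y : HatL S) : HatL S :=
  x.2.sum fun P a => y.2.sum fun Q b => (a * b) • hatBrkBasis P Q

/-- The `(S,χ)`-covariant operation on `L̂_S`:
`[a⊗t^m, b⊗t^n]_S = ∑_{γ∈S} χ(γ)^m ([σ_γ(a), b]⊗t^{m+n} + m⟨σ_γ(a), b⟩δ_{m+n,0} k)`,
with `[k, ·]_S = [·, k]_S = 0`. -/
noncomputable def hatBrkCov {S : Type*} [AddCommGroup S] (χ : S → ℂˣ) (x y : HatL S) :
    HatL S :=
  x.2.sum fun P a => y.2.sum fun Q b =>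
    (a * b) • ∑ᶠ γ : S, ((χ γ ^ P.2 : ℂˣ) : ℂ) • hatBrkBasis ((P.1.1, P.1.2 + γ), P.2) Q

/-- The subspace `I_S = span_ℂ{χ(γ)^m (σ_γ(a) ⊗ t^m) − a ⊗ t^m}`. -/
noncomputable def Icov {S : Type*} [AddCommGroup S] (χ : S → ℂˣ) : Submodule ℂ (HatL S) :=
  Submodule.span ℂ {x : HatL S | ∃ (γ : S) (a : LSpace S) (m : ℤ),
    x = ((χ γ ^ m : ℂˣ) : ℂ) • embedHat (sigmaL γ a) m - embedHat a m}

/-!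
Let `Φ : L̂_S → Â_S` be the linear map `L_{α,β} ⊗ t^m ↦ χ(-mβ) A_{α,m}`, `k ↦ c`. It is split by
`A_{α,m} ↦ L_{α,0} ⊗ t^m` and its kernel is exactly `I_S`, so it induces a linear isomorphism
`L̂_S/I_S ≃ Â_S` whose inverse is `ψ_A`. In `[L_{α,β} ⊗ t^m, L_{μ,ν} ⊗ t^n]_S` only three
translates `γ` contribute, and `Φ` sends the result to `χ(-mβ) χ(-nν) [A_{α,m}, A_{μ,n}]`.
Hence `Φ [x, y]_S = [Φ x, Φ y]`, which makes `I_S` an ideal and transports the bracket of `Â_S`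
to the quotient. That bracket is a Lie bracket: with `s(A) = χ(A) - χ(-A)` and
`ω((α,m),(μ,n)) = mμ - nα` one has `[A_p, A_q] = s(ω(p,q)) A_{p+q} + p₂ δ_{p+q,0} c`, and the
Jacobi identity on basis elements reduces to `s(A) s(B-C) + s(B) s(C-A) + s(C) s(A-B) = 0`.
-/

section Bilinear

variable {R α β M : Type*} [CommSemiring R] [AddCommMonoid M] [Module R M]

noncomputable def finsuppBilin (f : α → β → M) : (α →₀ R) →ₗ[R] (β →₀ R) →ₗ[R] M :=
  Finsupp.linearCombination R fun p => Finsupp.linearCombination R (f p)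

theorem finsuppBilin_apply (f : α → β → M) (x : α →₀ R) (y : β →₀ R) :
    finsuppBilin f x y = x.sum fun p a => y.sum fun q b => (a * b) • f p q := by
  simp [finsuppBilin, Finsupp.linearCombination_apply, Finsupp.smul_sum, mul_smul]

theorem finsuppBilin_single (f : α → β → M) (p : α) (q : β) (a b : R) :
    finsuppBilin f (Finsupp.single p a) (Finsupp.single q b) = (a * b) • f p q := by
  simp [finsuppBilin, mul_smul]

end Bilinear

section Trig

variable {S : Type*} [AddCommGroup S]

def trigForm (p q : S × ℤ) : S := p.2 • q.1 - q.2 • p.1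

theorem trigForm_swap (p q : S × ℤ) : trigForm q p = -trigForm p q := by
  simp [trigForm]

theorem trigForm_add_left (p q r : S × ℤ) : trigForm (p + q) r = trigForm p r + trigForm q r := by
  simp only [trigForm, Prod.fst_add, Prod.snd_add]; module

variable (χ : AddChar S ℂˣ)

noncomputable def sinChar (A : S) : ℂ := ((χ A : ℂˣ) : ℂ) - ((χ (-A) : ℂˣ) : ℂ)

theorem sinChar_neg (A : S) : sinChar χ (-A) = -sinChar χ A := by
  simp [sinChar]

theorem sinChar_jacobi (A B C : S) :
    sinChar χ A * sinChar χ (B - C) + sinChar χ B * sinChar χ (C - A) +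
      sinChar χ C * sinChar χ (A - B) = 0 := by
  simp only [sinChar, neg_sub, AddChar.map_sub_eq_div, AddChar.map_neg_eq_inv,
    Units.val_div_eq_div_val, Units.val_inv_eq_inv_val]
  ring

theorem AbrkBasis_eq (p q : S × ℤ) :
    AbrkBasis χ p q = (if p + q = 0 then (p.2 : ℂ) else 0,
      Finsupp.single (p + q) (sinChar χ (trigForm p q))) := by
  rw [AbrkBasis, sinChar, trigForm, neg_sub]
  congr 1
  simp only [Prod.ext_iff, Prod.fst_add, Prod.snd_add, Prod.fst_zero, Prod.snd_zero]

theorem AbrkBasis_snd (p q : S × ℤ) :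
    (AbrkBasis χ p q).2 = Finsupp.single (p + q) (sinChar χ (trigForm p q)) := by
  rw [AbrkBasis_eq]

theorem AbrkBasis_swap (p q : S × ℤ) : AbrkBasis χ q p = -AbrkBasis χ p q := by
  rw [AbrkBasis_eq, AbrkBasis_eq, add_comm q p, trigForm_swap, sinChar_neg]
  ext
  · dsimp only [Prod.fst_neg]
    split_ifs with h
    · have : q.2 = -p.2 := by have := (Prod.ext_iff.mp h).2; simp at this; omega
      simp [this]
    · simp
  · simp

theorem AbrkBasis_jacobi (p q r : S × ℤ) :
    sinChar χ (trigForm p q) • AbrkBasis χ (p + q) r +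
      sinChar χ (trigForm q r) • AbrkBasis χ (q + r) p +
      sinChar χ (trigForm r p) • AbrkBasis χ (r + p) q = 0 := by
  have hqrp : q + r + p = p + q + r := by abel
  have hrpq : r + p + q = p + q + r := by abel
  simp only [AbrkBasis_eq, Prod.smul_mk, Prod.mk_add_mk, Prod.mk_eq_zero, smul_eq_mul,
    Finsupp.smul_single, hqrp, hrpq]
  constructor
  · split_ifs with h
    · obtain rfl : r = -(p + q) := eq_neg_of_add_eq_zero_right h
      have hq : trigForm q (-(p + q)) = trigForm p q := by simp [trigForm]; module
      have hr : trigForm (-(p + q)) p = trigForm p q := by simp [trigForm]; module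
      simp only [hq, hr, Prod.snd_add, Prod.snd_neg]
      push_cast
      ring
    · simp
  · have hpq : trigForm (p + q) r = trigForm q r - trigForm r p := by
      rw [trigForm_add_left, trigForm_swap r p]; abel
    have hqr : trigForm (q + r) p = trigForm r p - trigForm p q := by
      rw [trigForm_add_left, trigForm_swap p q]; abel
    have hrp : trigForm (r + p) q = trigForm p q - trigForm q r := by
      rw [trigForm_add_left, trigForm_swap q r]; abel
    rw [hpq, hqr, hrp, ← Finsupp.single_add, ← Finsupp.single_add, sinChar_jacobi,
      Finsupp.single_zero]

theorem Abrk_eq (x y : TrigA S) : Abrk χ x y = finsuppBilin (AbrkBasis χ) x.2 y.2 :=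
  (finsuppBilin_apply _ _ _).symm

theorem Abrk_zero_left (y : TrigA S) : Abrk χ 0 y = 0 := by
  rw [Abrk_eq, Prod.snd_zero, map_zero, LinearMap.zero_apply]

theorem Abrk_zero_right (x : TrigA S) : Abrk χ x 0 = 0 := by
  rw [Abrk_eq, Prod.snd_zero, map_zero]

theorem Abrk_swap (x y : TrigA S) : Abrk χ y x = -Abrk χ x y := by
  have hflip : (finsuppBilin (AbrkBasis χ)).flip =
      (finsuppBilin (R := ℂ) (AbrkBasis χ)).compr₂ (-LinearMap.id) :=
    LinearMap.ext_basis Finsupp.basisSingleOne Finsupp.basisSingleOne fun p q => by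
      simp [finsuppBilin_single, AbrkBasis_swap χ p q]
  rw [Abrk_eq, Abrk_eq, ← LinearMap.flip_apply, hflip]
  rfl

theorem Abrk_self (x : TrigA S) : Abrk χ x x = 0 :=
  self_eq_neg.mp (Abrk_swap χ x x)

theorem Abrk_jacobi (x y z : TrigA S) :
    Abrk χ (Abrk χ x y) z + Abrk χ (Abrk χ y z) x + Abrk χ (Abrk χ z x) y = 0 := by
  simp only [Abrk_eq]
  induction x.2 using Finsupp.induction_linear with
  | zero => simp
  | add f₁ f₂ h₁ h₂ =>
    simp only [map_add, LinearMap.add_apply, Prod.snd_add]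
    linear_combination (norm := abel) h₁ + h₂
  | single p a =>
  induction y.2 using Finsupp.induction_linear with
  | zero => simp
  | add g₁ g₂ h₁ h₂ =>
    simp only [map_add, LinearMap.add_apply, Prod.snd_add]
    linear_combination (norm := abel) h₁ + h₂
  | single q b =>
  induction z.2 using Finsupp.induction_linear with
  | zero => simp
  | add h₁ h₂ e₁ e₂ =>
    simp only [map_add, LinearMap.add_apply, Prod.snd_add]
    linear_combination (norm := abel) e₁ + e₂
  | single r c =>
  simp only [finsuppBilin_single, Prod.smul_snd, AbrkBasis_snd, Finsupp.smul_single, smul_eq_mul]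
  linear_combination (norm := module) (a * b * c) • AbrkBasis_jacobi χ p q r

end Trig

section Embed

variable {S : Type*}

theorem embedHat_eq (a : LSpace S) (m : ℤ) :
    embedHat a m = LinearMap.inr ℂ ℂ _ (Finsupp.lmapDomain ℂ ℂ (·, m) a) := rfl

theorem embedHat_add (a b : LSpace S) (m : ℤ) :
    embedHat (a + b) m = embedHat a m + embedHat b m := by
  simp only [embedHat_eq, map_add]

theorem embedHat_smul (c : ℂ) (a : LSpace S) (m : ℤ) : embedHat (c • a) m = c • embedHat a m := by
  simp only [embedHat_eq, map_smul]

theorem embedHat_sub (a b : LSpace S) (m : ℤ) :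
    embedHat (a - b) m = embedHat a m - embedHat b m := by
  simp only [embedHat_eq, map_sub]

theorem embedHat_zero (m : ℤ) : embedHat (0 : LSpace S) m = 0 := by
  simp only [embedHat_eq, map_zero]

theorem embedHat_Lgen (α β : S) (m : ℤ) :
    embedHat (Lgen α β) m = (0, Finsupp.single ((α, β), m) 1) := by
  simp [embedHat_eq, Lgen]

end Embed

section Collapse

variable {S : Type*} [AddCommGroup S]

theorem sigmaL_eq (γ : S) (a : LSpace S) :
    sigmaL γ a = Finsupp.lmapDomain ℂ ℂ (fun p : S × S => (p.1, p.2 + γ)) a := rfl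

theorem sigmaL_add (γ : S) (a b : LSpace S) : sigmaL γ (a + b) = sigmaL γ a + sigmaL γ b := by
  simp only [sigmaL_eq, map_add]

theorem sigmaL_smul (γ : S) (c : ℂ) (a : LSpace S) : sigmaL γ (c • a) = c • sigmaL γ a := by
  simp only [sigmaL_eq, map_smul]

theorem sigmaL_Lgen (γ α β : S) : sigmaL γ (Lgen α β) = Lgen α (β + γ) := by
  simp [sigmaL_eq, Lgen]

variable (χ : AddChar S ℂˣ)

-- The twist `χ(-mβ)` on `L_{α,β} ⊗ t^m` is what makes every generator of `I_S` vanish.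
noncomputable def collapse : (((S × S) × ℤ) →₀ ℂ) →ₗ[ℂ] ((S × ℤ) →₀ ℂ) :=
  Finsupp.linearCombination ℂ fun P => Finsupp.single (P.1.1, P.2) ((χ (-(P.2 • P.1.2)) : ℂˣ) : ℂ)

noncomputable def hatToTrig : HatL S →ₗ[ℂ] TrigA S :=
  LinearMap.prodMap LinearMap.id (collapse χ)

variable (S) in
noncomputable def trigToHat : TrigA S →ₗ[ℂ] HatL S :=
  LinearMap.prodMap LinearMap.id <| Finsupp.lmapDomain ℂ ℂ fun p => ((p.1, 0), p.2)

theorem hatToTrig_Hatk : hatToTrig χ (Hatk S) = Acen S := by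
  simp [hatToTrig, collapse, Hatk, Acen]

theorem hatToTrig_embedHat_Lgen (α β : S) (m : ℤ) :
    hatToTrig χ (embedHat (Lgen α β) m) = ((χ (-(m • β)) : ℂˣ) : ℂ) • Agen α m := by
  simp [hatToTrig, collapse, embedHat_Lgen, Agen]

theorem trigToHat_Acen : trigToHat S (Acen S) = Hatk S := by
  simp [trigToHat, Acen, Hatk]

theorem trigToHat_Agen (α : S) (m : ℤ) : trigToHat S (Agen α m) = embedHat (Lgen α 0) m := by
  simp [trigToHat, Agen, embedHat_Lgen]

theorem hatToTrig_comp_trigToHat : hatToTrig χ ∘ₗ trigToHat S = LinearMap.id := by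
  ext <;> simp [hatToTrig, collapse, trigToHat]

theorem hatToTrig_embedHat_sigmaL (γ : S) (a : LSpace S) (m : ℤ) :
    ((χ γ ^ m : ℂˣ) : ℂ) • hatToTrig χ (embedHat (sigmaL γ a) m) = hatToTrig χ (embedHat a m) := by
  induction a using Finsupp.induction_linear with
  | zero => simp only [embedHat_eq, sigmaL_eq, map_zero, smul_zero]
  | add a b ha hb => rw [sigmaL_add, embedHat_add, embedHat_add, map_add, map_add, smul_add, ha, hb]
  | single p x =>
    obtain ⟨α, β⟩ := p
    rw [← Finsupp.smul_single_one, ← Lgen]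
    have hχ : χ γ ^ m * χ (-(m • (β + γ))) = χ (-(m • β)) := by
      rw [← AddChar.map_zsmul_eq_zpow, ← AddChar.map_add_eq_mul]; congr 1; module
    rw [sigmaL_smul, sigmaL_Lgen, embedHat_smul, embedHat_smul, map_smul, map_smul,
      hatToTrig_embedHat_Lgen, hatToTrig_embedHat_Lgen, ← hχ, Units.val_mul, mul_smul, smul_comm]

theorem Icov_le_ker : Icov χ ≤ LinearMap.ker (hatToTrig χ) := by
  rw [Icov, Submodule.span_le]
  rintro _ ⟨γ, a, m, rfl⟩
  rw [SetLike.mem_coe, LinearMap.mem_ker, map_sub, map_smul, hatToTrig_embedHat_sigmaL, sub_self]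

theorem embedHat_Lgen_sub_mem (α β : S) (m : ℤ) :
    embedHat (Lgen α β) m - ((χ (-(m • β)) : ℂˣ) : ℂ) • embedHat (Lgen α 0) m ∈ Icov χ := by
  have hgen : ((χ β ^ m : ℂˣ) : ℂ) • embedHat (sigmaL β (Lgen α 0)) m - embedHat (Lgen α 0) m ∈
      Icov χ := Submodule.subset_span ⟨β, Lgen α 0, m, rfl⟩
  convert Submodule.smul_mem _ ((χ (-(m • β)) : ℂˣ) : ℂ) hgen using 1
  have hχ : χ (-(m • β)) * χ β ^ m = 1 := by
    rw [← AddChar.map_zsmul_eq_zpow, ← AddChar.map_add_eq_mul, neg_add_cancel,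
      AddChar.map_zero_eq_one]
  rw [sigmaL_Lgen, zero_add, smul_sub, smul_smul, ← Units.val_mul, hχ, Units.val_one, one_smul]

theorem sub_trigToHat_hatToTrig_mem (x : HatL S) : x - trigToHat S (hatToTrig χ x) ∈ Icov χ := by
  suffices (Icov χ).mkQ ∘ₗ (LinearMap.id - trigToHat S ∘ₗ hatToTrig χ) = 0 by
    simpa [← Submodule.Quotient.mk_sub, Submodule.Quotient.mk_eq_zero] using
      LinearMap.congr_fun this x
  ext ⟨⟨α, β⟩, m⟩
  · simp [hatToTrig, collapse, trigToHat]
  · simpa [hatToTrig, collapse, trigToHat, embedHat_Lgen, Finsupp.smul_single] using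
      embedHat_Lgen_sub_mem χ α β m

theorem Icov_eq_ker : Icov χ = LinearMap.ker (hatToTrig χ) := by
  refine le_antisymm (Icov_le_ker χ) fun x hx => ?_
  simpa [LinearMap.mem_ker.mp hx] using sub_trigToHat_hatToTrig_mem χ x

end Collapse

section Covariant

variable {S : Type*} [AddCommGroup S]

theorem finsum_ite_add_eq {M : Type*} [AddCommMonoid M] (β c : S) (v : S → M) :
    ∑ᶠ γ, (if β + γ = c then v γ else 0) = v (c - β) := by
  rw [finsum_eq_single _ (c - β) fun γ hγ => if_neg fun h => hγ (eq_sub_iff_add_eq'.mpr h)]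
  simp

theorem hasFiniteSupport_ite_add_eq {M : Type*} [AddCommMonoid M] (β c : S) (v : S → M) :
    Function.HasFiniteSupport fun γ => if β + γ = c then v γ else 0 :=
  (Set.finite_singleton (c - β)).subset fun γ hγ => by
    rw [Set.mem_singleton_iff, eq_sub_iff_add_eq']
    by_contra h
    exact hγ (if_neg h)

theorem LmulBasis_left (α β μ ν : S) :
    LmulBasis (α, β) (μ, ν) = if β = α + μ + ν then Lgen (α + μ) (α + ν) else 0 := by
  simp only [LmulBasis, Lgen, eq_sub_iff_add_eq, add_comm _ ν, eq_comm (a := β)]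

theorem LmulBasis_right (α β μ ν : S) :
    LmulBasis (μ, ν) (α, β) = if β = ν - α - μ then Lgen (α + μ) (ν - α) else 0 := by
  have hcond : μ + α = ν - β ↔ β = ν - α - μ := by
    simp only [eq_sub_iff_add_eq]
    constructor <;> intro h <;> rw [← h] <;> abel
  simp only [LmulBasis, Lgen, hcond]
  split_ifs with h
  · rw [h, add_comm μ α]; congr 2; abel
  · rfl

theorem hatBrkBasis_eq (α β μ ν : S) (m n : ℤ) :
    hatBrkBasis ((α, β), m) ((μ, ν), n) =
      (if β = ν then (if α + μ = 0 ∧ m + n = 0 then (m : ℂ) else 0) • Hatk S else 0) +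
      (if β = α + μ + ν then embedHat (Lgen (α + μ) (α + ν)) (m + n) else 0) -
      (if β = ν - α - μ then embedHat (Lgen (α + μ) (ν - α)) (m + n) else 0) := by
  have hsplit : hatBrkBasis ((α, β), m) ((μ, ν), n) =
      (if m + n = 0 then (m : ℂ) * LformBasis (α, β) (μ, ν) else 0) • Hatk S +
        embedHat (LmulBasis (α, β) (μ, ν) - LmulBasis (μ, ν) (α, β)) (m + n) := by
    by_cases h : m + n = 0 <;> refine Prod.ext ?_ ?_ <;> simp [hatBrkBasis, Hatk, embedHat, h]
  have hcentral : (if m + n = 0 then (m : ℂ) * LformBasis (α, β) (μ, ν) else 0) =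
      if β = ν then (if α + μ = 0 ∧ m + n = 0 then (m : ℂ) else 0) else 0 := by
    simp only [LformBasis]
    split_ifs <;> simp_all
  rw [hsplit, hcentral, LmulBasis_left, LmulBasis_right, embedHat_sub, add_sub_assoc, ite_smul,
    zero_smul, apply_ite (embedHat · (m + n)), apply_ite (embedHat · (m + n)), embedHat_zero]

noncomputable def hatBrkCovBasis (χ : S → ℂˣ) (P Q : (S × S) × ℤ) : HatL S :=
  ∑ᶠ γ : S, ((χ γ ^ P.2 : ℂˣ) : ℂ) • hatBrkBasis ((P.1.1, P.1.2 + γ), P.2) Q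

theorem hatBrkCov_eq (χ : S → ℂˣ) (x y : HatL S) :
    hatBrkCov χ x y = finsuppBilin (hatBrkCovBasis χ) x.2 y.2 :=
  (finsuppBilin_apply _ _ _).symm

variable (χ : AddChar S ℂˣ)

-- By `hatBrkBasis_eq`, only three translates `γ` contribute to the sum defining `[·,·]_S`.
theorem hatBrkCovBasis_eq (α β μ ν : S) (m n : ℤ) :
    hatBrkCovBasis χ ((α, β), m) ((μ, ν), n) =
      ((χ (ν - β) ^ m : ℂˣ) : ℂ) • (if α + μ = 0 ∧ m + n = 0 then (m : ℂ) else 0) • Hatk S +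
      ((χ (α + μ + ν - β) ^ m : ℂˣ) : ℂ) • embedHat (Lgen (α + μ) (α + ν)) (m + n) -
      ((χ (ν - α - μ - β) ^ m : ℂˣ) : ℂ) • embedHat (Lgen (α + μ) (ν - α)) (m + n) := by
  simp only [hatBrkCovBasis, hatBrkBasis_eq, smul_add, smul_sub, smul_ite, smul_zero]
  rw [finsum_sub_distrib
      ((hasFiniteSupport_ite_add_eq _ _ _).add (hasFiniteSupport_ite_add_eq _ _ _))
      (hasFiniteSupport_ite_add_eq _ _ _),
    finsum_add_distrib (hasFiniteSupport_ite_add_eq _ _ _) (hasFiniteSupport_ite_add_eq _ _ _),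
    finsum_ite_add_eq, finsum_ite_add_eq, finsum_ite_add_eq]

theorem AbrkBasis_eq_smul (α μ : S) (m n : ℤ) :
    AbrkBasis χ (α, m) (μ, n) = (if α + μ = 0 ∧ m + n = 0 then (m : ℂ) else 0) • Acen S +
      sinChar χ (m • μ - n • α) • Agen (α + μ) (m + n) := by
  split_ifs with h <;> refine Prod.ext ?_ ?_ <;> simp [AbrkBasis, Acen, Agen, sinChar, h]

theorem hatToTrig_hatBrkCovBasis (α β μ ν : S) (m n : ℤ) :
    hatToTrig χ (hatBrkCovBasis χ ((α, β), m) ((μ, ν), n)) =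
      ((χ (-(m • β)) * χ (-(n • ν)) : ℂˣ) : ℂ) • AbrkBasis χ (α, m) (μ, n) := by
  rw [hatBrkCovBasis_eq, AbrkBasis_eq_smul]
  have h₁ : χ (α + μ + ν - β) ^ m * χ (-((m + n) • (α + ν))) =
      χ (-(m • β)) * χ (-(n • ν)) * χ (m • μ - n • α) := by
    simp only [← AddChar.map_zsmul_eq_zpow, ← AddChar.map_add_eq_mul]; congr 1; module
  have h₂ : χ (ν - α - μ - β) ^ m * χ (-((m + n) • (ν - α))) =
      χ (-(m • β)) * χ (-(n • ν)) * χ (-(m • μ - n • α)) := by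
    simp only [← AddChar.map_zsmul_eq_zpow, ← AddChar.map_add_eq_mul]; congr 1; module
  have h₀ : ((χ (ν - β) ^ m : ℂˣ) : ℂ) * (if α + μ = 0 ∧ m + n = 0 then (m : ℂ) else 0) =
      ((χ (-(m • β)) * χ (-(n • ν)) : ℂˣ) : ℂ) *
        (if α + μ = 0 ∧ m + n = 0 then (m : ℂ) else 0) := by
    split_ifs with h
    · obtain rfl : n = -m := by omega
      congr 2
      simp only [← AddChar.map_zsmul_eq_zpow, ← AddChar.map_add_eq_mul]; congr 1; module
    · simp
  simp only [map_add, map_sub, map_smul, hatToTrig_Hatk, hatToTrig_embedHat_Lgen, smul_smul,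
    sinChar]
  linear_combination (norm := module)
    h₀ • Acen S + (congrArg Units.val h₁ : _) • Agen (α + μ) (m + n) -
      (congrArg Units.val h₂ : _) • Agen (α + μ) (m + n)

theorem hatToTrig_hatBrkCov (x y : HatL S) :
    hatToTrig χ (hatBrkCov χ x y) = Abrk χ (hatToTrig χ x) (hatToTrig χ y) := by
  have hbasis : (finsuppBilin (hatBrkCovBasis χ)).compr₂ (hatToTrig χ) =
      (finsuppBilin (AbrkBasis χ)).compl₁₂ (collapse χ) (collapse χ) :=
    LinearMap.ext_basis Finsupp.basisSingleOne Finsupp.basisSingleOne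
      fun ⟨⟨α, β⟩, m⟩ ⟨⟨μ, ν⟩, n⟩ => by
        simp [finsuppBilin_single, collapse, hatToTrig_hatBrkCovBasis]
  rw [hatBrkCov_eq, Abrk_eq]
  exact LinearMap.congr_fun₂ hbasis x.2 y.2

end Covariant

section Quotient

variable {S : Type*} [AddCommGroup S] (χ : AddChar S ℂˣ)

noncomputable def trigEquiv : TrigA S ≃ₗ[ℂ] HatL S ⧸ Icov χ :=
  ((Submodule.quotEquivOfEq _ _ (Icov_eq_ker χ)).trans ((hatToTrig χ).quotKerEquivOfSurjective
    fun t => ⟨trigToHat S t, LinearMap.congr_fun (hatToTrig_comp_trigToHat χ) t⟩)).symm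

theorem trigEquiv_symm_mk (x : HatL S) :
    (trigEquiv χ).symm (Submodule.Quotient.mk x) = hatToTrig χ x := rfl

theorem trigEquiv_apply (t : TrigA S) :
    trigEquiv χ t = Submodule.Quotient.mk (trigToHat S t) := by
  rw [eq_comm, ← LinearEquiv.symm_apply_eq, trigEquiv_symm_mk]
  exact LinearMap.congr_fun (hatToTrig_comp_trigToHat χ) t

end Quotient

theorem stmt9 {S : Type*} [AddCommGroup S] (χ : S → ℂˣ)
    (hχ : ∀ a b : S, χ (a + b) = χ a * χ b) :
    -- `I_S` is a two-sided ideal for `[·,·]_S`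
    (∀ x ∈ Icov χ, ∀ y : HatL S, hatBrkCov χ x y ∈ Icov χ ∧ hatBrkCov χ y x ∈ Icov χ) ∧
    -- the induced operation on the quotient `L̂_S/I_S` is a Lie bracket, and `Â_S` is
    -- isomorphic, as a complex Lie algebra, to this quotient via `ψ_A`
    (∃ b : (HatL S ⧸ Icov χ) → (HatL S ⧸ Icov χ) → (HatL S ⧸ Icov χ),
      (∀ x y : HatL S, b (Submodule.Quotient.mk x) (Submodule.Quotient.mk y) =
        Submodule.Quotient.mk (hatBrkCov χ x y)) ∧
      (∀ x, b x x = 0) ∧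
      (∀ x y z, b (b x y) z + b (b y z) x + b (b z x) y = 0) ∧
      ∃ ψ : TrigA S ≃ₗ[ℂ] (HatL S ⧸ Icov χ),
        ψ (Acen S) = Submodule.Quotient.mk (Hatk S) ∧
        (∀ (α : S) (m : ℤ),
          ψ (Agen α m) = Submodule.Quotient.mk (embedHat (Lgen α 0) m)) ∧
        (∀ x y : TrigA S, ψ (Abrk χ x y) = b (ψ x) (ψ y))) := by
  obtain ⟨χ, rfl⟩ : ∃ ψ : AddChar S ℂˣ, ⇑ψ = χ := ⟨⟨χ, by simpa using hχ 0 0, hχ⟩, rfl⟩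
  refine ⟨fun x hx y => ⟨?_, ?_⟩,
    fun u v => trigEquiv χ (Abrk χ ((trigEquiv χ).symm u) ((trigEquiv χ).symm v)), fun x y => ?_,
    fun u => ?_, fun u v w => ?_, trigEquiv χ, ?_, fun α m => ?_, fun x y => ?_⟩
  · rw [Icov_eq_ker, LinearMap.mem_ker] at hx ⊢
    rw [hatToTrig_hatBrkCov, hx, Abrk_zero_left]
  · rw [Icov_eq_ker, LinearMap.mem_ker] at hx ⊢
    rw [hatToTrig_hatBrkCov, hx, Abrk_zero_right]
  · dsimp only
    rw [trigEquiv_symm_mk, trigEquiv_symm_mk, ← hatToTrig_hatBrkCov, ← trigEquiv_symm_mk,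
      LinearEquiv.apply_symm_apply]
  · dsimp only
    rw [Abrk_self, map_zero]
  · simp only [LinearEquiv.symm_apply_apply, ← map_add, Abrk_jacobi, map_zero]
  · rw [trigEquiv_apply, trigToHat_Acen]
  · rw [trigEquiv_apply, trigToHat_Agen]
  · simp only [LinearEquiv.symm_apply_apply]
end
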